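/- arXiv:1504.07127 — 2 statements merged into one kernel-verified Lean document; each statement's English description precedes it below -/
import Mathlib

section
/- Let G be the graph whose vertices are the 2n-element subsets of [N], with an edge between X₁ and X₂ iff |X₁ ∩ X₂| = n. If S₁,...,S_m is an (N,n)-distinguisher (for every pair of disjoint n-sets Y₁, Y₂ there is i with |Y₁ ∩ S_i| ≠ |Y₂ ∩ S_i|), then the coloring assigning to X the tuple (|X ∩ S₁|,...,|X ∩ S_m|) is a proper coloring of G; hence χ(G) ≤ (2n+1)^m. -/
/-- The graph on 2n-subsets of [N] with edges between sets intersecting in exactly n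
    elements. -/
def interGraph (N n : ℕ) : SimpleGraph {X : Finset (Fin N) // X.card = 2 * n} :=
  SimpleGraph.fromRel (fun X₁ X₂ => (X₁.1 ∩ X₂.1).card = n)

lemma card_inter_split (X₁ X₂ T : Finset (Fin N)) :
    (X₁ ∩ T).card = ((X₁ ∩ X₂) ∩ T).card + ((X₁ \ X₂) ∩ T).card := by
  rw [← Finset.card_union_of_disjoint, ← Finset.union_inter_distrib_right,
    Finset.union_comm, Finset.sdiff_union_inter]
  exact ((Finset.sdiff_disjoint.symm.mono_left Finset.inter_subset_right :
    Disjoint (X₁ ∩ X₂) (X₁ \ X₂))).mono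
    Finset.inter_subset_left Finset.inter_subset_left

/-- If S₁,…,S_m is an (N,n)-distinguisher, then the tuple of intersection sizes is a
    proper coloring of the graph G on 2n-subsets (edges: intersection of size exactly n);
    hence χ(G) ≤ (2n+1)^m. -/
theorem distinguisher_coloring (N n m : ℕ) (h : 2 * n ≤ N)
    (S : Fin m → Finset (Fin N))
    (hdist : ∀ Y₁ Y₂ : Finset (Fin N), Disjoint Y₁ Y₂ → Y₁.card = n → Y₂.card = n →
      ∃ i, (Y₁ ∩ S i).card ≠ (Y₂ ∩ S i).card) :
    (∀ X₁ X₂ : {X : Finset (Fin N) // X.card = 2 * n},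
        (interGraph N n).Adj X₁ X₂ →
          (fun i => (X₁.1 ∩ S i).card) ≠ (fun i => (X₂.1 ∩ S i).card)) ∧
    (interGraph N n).Colorable ((2 * n + 1) ^ m) := by
  have key : ∀ X₁ X₂ : Finset (Fin N), X₁.card = 2 * n → X₂.card = 2 * n →
      (X₁ ∩ X₂).card = n →
      (fun i => (X₁ ∩ S i).card) ≠ (fun i => (X₂ ∩ S i).card) := by
    intro X₁ X₂ h₁ h₂ hinter heq
    have hd : Disjoint (X₁ \ X₂) (X₂ \ X₁) :=
      Finset.disjoint_sdiff.mono Finset.sdiff_subset le_rfl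
    have hc₁ : (X₁ \ X₂).card = n := by
      have := Finset.card_inter_add_card_sdiff X₁ X₂
      omega
    have hc₂ : (X₂ \ X₁).card = n := by
      have := Finset.card_inter_add_card_sdiff X₂ X₁
      rw [Finset.inter_comm] at this
      omega
    obtain ⟨i, hi⟩ := hdist _ _ hd hc₁ hc₂
    apply hi
    have e₁ := card_inter_split X₁ X₂ (S i)
    have e₂ := card_inter_split X₂ X₁ (S i)
    rw [Finset.inter_comm X₂ X₁] at e₂
    have := congrFun heq i
    omega
  have hproper : ∀ X₁ X₂ : {X : Finset (Fin N) // X.card = 2 * n},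
      (interGraph N n).Adj X₁ X₂ →
        (fun i => (X₁.1 ∩ S i).card) ≠ (fun i => (X₂.1 ∩ S i).card) := by
    intro X₁ X₂ hadj
    obtain ⟨-, hcase⟩ := hadj
    rcases hcase with hc | hc
    · exact key _ _ X₁.2 X₂.2 hc
    · exact fun heq => key _ _ X₂.2 X₁.2 hc heq.symm
  refine ⟨hproper, ?_⟩
  have hlt : ∀ (X : Finset (Fin N)) (i : Fin m), (X ∩ S i).card = 2 * n →
      (X ∩ S i).card < 2 * n + 1 := fun _ _ h => by omega
  let C : (interGraph N n).Coloring (Fin m → Fin (2 * n + 1)) :=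
    SimpleGraph.Coloring.mk
      (fun X i => ⟨(X.1 ∩ S i).card, by
        have : (X.1 ∩ S i).card ≤ X.1.card := Finset.card_le_card Finset.inter_subset_left
        omega⟩)
      (by
        intro X₁ X₂ hadj heq
        apply hproper X₁ X₂ hadj
        funext i
        have := congrFun heq i
        exact congrArg Fin.val this)
  have := C.colorable
  simpa [Fintype.card_fun] using this
end

section
/- There exists an (N, n)-selective family of size O(n log(N/n)): for any N > 2 and n ≤ N there is a family F of subsets of [N] with |F| ≤ c·n·log(N/n) (for an absolute constant c) such that for every nonempty Z ⊆ [N] with |Z| ≤ n, some F ∈ F satisfies |Z ∩ F| = 1. -/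
/-!
For `2 ^ j ≤ #Z ≤ t = 2 ^ (j + 1)`, the zero set of a uniformly random `f : Fin N → Fin t` meets
`Z` in exactly one point with probability `#Z / t * (1 - 1 / t) ^ (#Z - 1) ≥ 1 / 6`. Comparing
with `∑ Z, x ^ #Z = (1 + x) ^ N` at `x = 2 ^ j / N` shows that there are at most
`exp (2 ^ j * (1 + 2 * log (N / 2 ^ j)))` such `Z`, so by the union bound
`O(2 ^ j * log (N / 2 ^ j))` independent samples serve all of them at once. Summing over the
scales `j ≤ log₂ n` costs `O(n log (2N / n))` because `∑ j < M, 2 ^ j * (M - j) < 2 ^ (M + 1)`.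
-/

open Finset

theorem card_filter_card_filter_eq_zero_eq_one {α : Type*} [Fintype α] [DecidableEq α] {t : ℕ}
    [NeZero t] (Z : Finset α) :
    #{f : α → Fin t | #{a ∈ Z | f a = 0} = 1} =
      #Z * (t - 1) ^ (#Z - 1) * t ^ (Fintype.card α - #Z) := by
  let S : α → α → Finset (Fin t) := fun z a => if a = z then {0} else if a ∈ Z then {0}ᶜ else univ
  have mem_S {z} (hz : z ∈ Z) (f : α → Fin t) :
      f ∈ Fintype.piFinset (S z) ↔ ({a ∈ Z | f a = 0} : Finset α) = {z} := by
    simp only [Fintype.mem_piFinset, Finset.ext_iff, mem_filter, mem_singleton]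
    refine forall_congr' fun a => ?_
    by_cases haz : a = z
    · subst haz; simp [S, hz]
    · by_cases ha : a ∈ Z <;> simp [S, haz, ha]
  have card_S {z} (hz : z ∈ Z) :
      #(Fintype.piFinset (S z)) = (t - 1) ^ (#Z - 1) * t ^ (Fintype.card α - #Z) := by
    rw [Fintype.card_piFinset, ← prod_mul_prod_compl Z, ← mul_prod_erase Z _ hz]
    have hZ : ∀ a ∈ Z.erase z, #(S z a) = t - 1 := fun a ha => by
      simp [S, ne_of_mem_erase ha, mem_of_mem_erase ha, card_compl]
    have hZc : ∀ a ∈ Zᶜ, #(S z a) = t := fun a ha => by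
      have : a ≠ z := by rintro rfl; exact mem_compl.1 ha hz
      simp [S, this, mem_compl.1 ha]
    simp [prod_congr rfl hZ, prod_congr rfl hZc, S, card_erase_of_mem hz, card_compl]
  have hgood : ({f : α → Fin t | #{a ∈ Z | f a = 0} = 1} : Finset _) =
      Z.biUnion fun z => Fintype.piFinset (S z) := by
    ext f
    simp only [mem_filter, mem_univ, true_and, mem_biUnion, card_eq_one]
    constructor
    · rintro ⟨z, hf⟩
      have hz : z ∈ Z := (mem_filter.1 (hf ▸ mem_singleton_self z)).1
      exact ⟨z, hz, (mem_S hz f).2 hf⟩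
    · rintro ⟨z, hz, hf⟩
      exact ⟨z, (mem_S hz f).1 hf⟩
  rw [hgood, card_biUnion, sum_congr rfl fun z hz => card_S hz, sum_const, smul_eq_mul, mul_assoc]
  intro z hz z' hz' hne
  refine disjoint_left.2 fun f hf hf' => hne ?_
  exact singleton_injective (((mem_S hz f).1 hf).symm.trans ((mem_S hz' f).1 hf'))

theorem natCast_add_one_pow_le_exp_one_mul_pow {s j : ℕ} (hj : j ≤ s) :
    ((s : ℝ) + 1) ^ j ≤ Real.exp 1 * (s : ℝ) ^ j := by
  rcases Nat.eq_zero_or_pos s with rfl | hs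
  · obtain rfl : j = 0 := by omega
    simp [Real.one_le_exp zero_le_one]
  have hs' : (0 : ℝ) < s := by exact_mod_cast hs
  calc ((s : ℝ) + 1) ^ j = (1 + (s : ℝ)⁻¹) ^ j * (s : ℝ) ^ j := by
        rw [← mul_pow]; congr 1; field_simp
    _ ≤ (1 + (s : ℝ)⁻¹) ^ s * (s : ℝ) ^ j := by
        gcongr
        simp
    _ ≤ Real.exp 1 * (s : ℝ) ^ j := by gcongr; exact Real.one_add_inv_pow_le_exp

theorem card_fun_le_six_mul_card_filter_card_filter_eq_zero_eq_one {α : Type*} [Fintype α]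
    [DecidableEq α] {t : ℕ} [NeZero t] {Z : Finset α} (h₁ : t ≤ 2 * #Z) (h₂ : #Z ≤ t) :
    (Fintype.card (α → Fin t) : ℝ) ≤ 6 * #{f : α → Fin t | #{a ∈ Z | f a = 0} = 1} := by
  obtain ⟨k, hk⟩ : ∃ k, #Z = k + 1 := Nat.exists_eq_succ_of_ne_zero (by grind [NeZero.ne t])
  obtain ⟨s, rfl⟩ : ∃ s, t = s + 1 := Nat.exists_eq_succ_of_ne_zero (NeZero.ne t)
  have hN : Fintype.card α = (k + 1) + (Fintype.card α - #Z) := by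
    have := card_le_univ Z; omega
  rw [card_filter_card_filter_eq_zero_eq_one, hk, Fintype.card_fun, Fintype.card_fin, hN]
  push_cast
  have he := natCast_add_one_pow_le_exp_one_mul_pow (s := s) (j := k) (by omega)
  have h₁' : (s : ℝ) + 1 ≤ 2 * ((k : ℝ) + 1) := by rw [hk] at h₁; exact_mod_cast h₁
  have he₁ := Real.exp_one_lt_d9
  simp only [add_tsub_cancel_left]
  rw [pow_add, pow_succ, ← mul_assoc]
  gcongr ?_ * _
  calc ((s : ℝ) + 1) ^ k * (s + 1) ≤ (Real.exp 1 * s ^ k) * (2 * (k + 1)) := by gcongr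
    _ ≤ 6 * ((k + 1) * s ^ k) := by nlinarith [show (0:ℝ) ≤ (k + 1) * s ^ k by positivity]

theorem card_filter_card_le_mul_pow_le {α : Type*} [Fintype α] {x : ℝ} (hx₀ : 0 ≤ x)
    (hx₁ : x ≤ 1) (K : ℕ) :
    #{Z : Finset α | #Z ≤ K} * x ^ K ≤ (x + 1) ^ Fintype.card α := by
  classical
  calc (#{Z : Finset α | #Z ≤ K} : ℝ) * x ^ K = ∑ Z : Finset α with #Z ≤ K, x ^ K := by
        rw [sum_const, nsmul_eq_mul]
    _ ≤ ∑ Z : Finset α with #Z ≤ K, x ^ #Z := sum_le_sum fun Z hZ =>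
        pow_le_pow_of_le_one hx₀ hx₁ (mem_filter.1 hZ).2
    _ ≤ ∑ Z : Finset α, x ^ #Z := sum_le_sum_of_subset_of_nonneg (filter_subset _ _)
        fun _ _ _ => by positivity
    _ = (x + 1) ^ Fintype.card α := by
        simpa using Fintype.sum_pow_mul_eq_add_pow α x 1

theorem card_filter_card_le_le_exp {α : Type*} [Fintype α] {x : ℝ} (hx₀ : 0 < x) (hx₁ : x ≤ 1)
    (K : ℕ) : #{Z : Finset α | #Z ≤ K} ≤ Real.exp (x * Fintype.card α - K * Real.log x) := by
  have h := card_filter_card_le_mul_pow_le (α := α) hx₀.le hx₁ K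
  rw [Real.exp_sub, le_div_iff₀ (Real.exp_pos _), ← Real.log_pow, Real.exp_log (by positivity),
    mul_comm x, Real.exp_nat_mul]
  calc _ ≤ (x + 1) ^ Fintype.card α := h
    _ ≤ _ := by gcongr; linarith [Real.add_one_le_exp x]

theorem exists_forall_exists_of_card_filter_not_le {Ω ι : Type*} [Fintype Ω] [Nonempty Ω]
    (P : ι → Ω → Prop) [∀ i, DecidablePred (P i)] (s : Finset ι) {q : ℝ}
    (hbad : ∀ i ∈ s, (#{ω | ¬ P i ω} : ℝ) ≤ q * Fintype.card Ω) {m : ℕ} (hm : #s * q ^ m < 1) :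
    ∃ ω : Fin m → Ω, ∀ i ∈ s, ∃ j, P i (ω j) := by
  classical
  by_contra! h
  have hcover : (univ : Finset (Fin m → Ω)) ⊆
      s.biUnion fun i => Fintype.piFinset fun _ => {ω | ¬ P i ω} := fun ω _ => by
    obtain ⟨i, hi, hω⟩ := h ω
    exact mem_biUnion.2 ⟨i, hi, Fintype.mem_piFinset.2 fun j => by simpa using hω j⟩
  have hpos : (0 : ℝ) < (Fintype.card Ω : ℝ) ^ m := by positivity
  have hcard := (card_le_card hcover).trans card_biUnion_le
  have hle : ((Fintype.card Ω) ^ m : ℝ) ≤ #s * q ^ m * (Fintype.card Ω : ℝ) ^ m := by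
    calc ((Fintype.card Ω) ^ m : ℝ) ≤ ∑ i ∈ s, (#{ω | ¬ P i ω} : ℝ) ^ m := by
          exact_mod_cast (by simpa [Fintype.card_piFinset] using hcard)
      _ ≤ ∑ i ∈ s, (q * Fintype.card Ω) ^ m := sum_le_sum fun i hi => by
          gcongr
          exact hbad i hi
      _ = _ := by rw [sum_const, nsmul_eq_mul, mul_pow, mul_assoc]
  nlinarith

def Selects {α : Type*} [DecidableEq α] (G : Finset (Finset α)) (Z : Finset α) : Prop :=
  ∃ F ∈ G, #(Z ∩ F) = 1

theorem exists_selects_of_card_le_exp {α : Type*} [Fintype α] [DecidableEq α] {t : ℕ}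
    (ht : 0 < t) {Zs : Finset (Finset α)} (hZs : ∀ Z ∈ Zs, t ≤ 2 * #Z ∧ #Z ≤ t) {R : ℝ}
    (hR : 0 ≤ R) (hcard : #Zs ≤ Real.exp R) :
    ∃ G : Finset (Finset α), #G ≤ 6 * R + 1 ∧ ∀ Z ∈ Zs, Selects G Z := by
  have : NeZero t := ⟨ht.ne'⟩
  have hbad : ∀ Z ∈ Zs, (#{f : α → Fin t | ¬ #{a ∈ Z | f a = 0} = 1} : ℝ) ≤
      5 / 6 * Fintype.card (α → Fin t) := fun Z hZ => by
    have hgood :=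
      card_fun_le_six_mul_card_filter_card_filter_eq_zero_eq_one (hZs Z hZ).1 (hZs Z hZ).2
    have hsplit := card_filter_add_card_filter_not (s := univ)
      fun f : α → Fin t => #{a ∈ Z | f a = 0} = 1
    rw [card_univ] at hsplit
    rw [← hsplit] at hgood ⊢
    push_cast at hgood ⊢
    linarith
  set m := ⌊6 * R⌋₊ + 1
  have hm : #Zs * (5 / 6 : ℝ) ^ m < 1 := by
    have hq : (5 / 6 : ℝ) ≤ Real.exp (-(1 / 6)) := by linarith [Real.add_one_le_exp (-(1 / 6))]
    have hmR : 6 * R < m := by simpa [m] using Nat.lt_floor_add_one (6 * R)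
    calc #Zs * (5 / 6 : ℝ) ^ m ≤ Real.exp R * Real.exp (-(1 / 6)) ^ m := by gcongr
      _ = Real.exp (R - m / 6) := by rw [← Real.exp_nat_mul, ← Real.exp_add]; ring_nf
      _ < 1 := Real.exp_lt_one_iff.2 (by linarith)
  obtain ⟨ω, hω⟩ := exists_forall_exists_of_card_filter_not_le _ Zs hbad hm
  refine ⟨univ.image fun i => ({a | ω i a = 0} : Finset α), ?_, fun Z hZ => ?_⟩
  · calc (#(univ.image fun i => ({a | ω i a = 0} : Finset α)) : ℝ) ≤ m := by
          exact_mod_cast card_image_le.trans (card_fin m).le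
      _ ≤ 6 * R + 1 := by push_cast [m]; linarith [Nat.floor_le (by positivity : 0 ≤ 6 * R)]
  · obtain ⟨i, hi⟩ := hω Z hZ
    exact ⟨_, mem_image_of_mem _ (mem_univ i), by rwa [inter_filter, inter_univ]⟩

noncomputable def scaleBound (N j : ℕ) : ℝ :=
  6 * (2 ^ j * (1 + 2 * Real.log (N / 2 ^ j))) + 1

theorem exists_selects_of_two_pow_le {α : Type*} [Fintype α] [DecidableEq α] {j : ℕ}
    (hj : 2 ^ j ≤ Fintype.card α) :
    ∃ G : Finset (Finset α), #G ≤ scaleBound (Fintype.card α) j ∧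
      ∀ Z : Finset α, 2 ^ j ≤ #Z → #Z ≤ 2 ^ (j + 1) → Selects G Z := by
  set N := Fintype.card α
  have hNj : (1 : ℝ) ≤ N / 2 ^ j := by
    rw [one_le_div (by positivity)]; exact_mod_cast hj
  have hlog : 0 ≤ Real.log (N / 2 ^ j) := Real.log_nonneg hNj
  have hcard : #{Z : Finset α | 2 ^ j ≤ #Z ∧ #Z ≤ 2 ^ (j + 1)} ≤
      Real.exp (2 ^ j * (1 + 2 * Real.log (N / 2 ^ j))) := by
    calc (#{Z : Finset α | 2 ^ j ≤ #Z ∧ #Z ≤ 2 ^ (j + 1)} : ℝ)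
        ≤ #{Z : Finset α | #Z ≤ 2 ^ (j + 1)} := by
          exact_mod_cast card_le_card (monotone_filter_right _ fun _ _ (h : _ ∧ _) => h.2)
      _ ≤ Real.exp (((N : ℝ) / 2 ^ j)⁻¹ * N - (2 ^ (j + 1) : ℕ) * Real.log ((N : ℝ) / 2 ^ j)⁻¹) :=
          card_filter_card_le_le_exp (by positivity) (inv_le_one_of_one_le₀ hNj) _
      _ = _ := by
          have hN : (N : ℝ) ≠ 0 := by norm_cast; exact ((Nat.two_pow_pos j).trans_le hj).ne'
          rw [Real.log_inv]; push_cast; field_simp; ring_nf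
  obtain ⟨G, hG, hsel⟩ := exists_selects_of_card_le_exp
    (t := 2 ^ (j + 1)) (by positivity) (fun Z hZ => by rw [mem_filter, pow_succ] at hZ; omega)
    (mul_nonneg (by positivity) (by linarith)) hcard
  exact ⟨G, hG, fun Z h₁ h₂ => hsel Z (by simp [h₁, h₂])⟩

theorem sum_range_two_pow_mul_sub (M : ℕ) :
    ∑ j ∈ range M, (2 : ℝ) ^ j * (M - j) = 2 ^ (M + 1) - M - 2 := by
  induction M with
  | zero => norm_num
  | succ M ih =>
    have hshift : ∑ j ∈ range M, (2 : ℝ) ^ (j + 1) * ((M + 1 : ℕ) - (j + 1 : ℕ)) =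
        2 * ∑ j ∈ range M, (2 : ℝ) ^ j * (M - j) := by
      rw [mul_sum]
      refine sum_congr rfl fun j _ => ?_
      push_cast
      ring
    rw [sum_range_succ', hshift, ih]
    push_cast
    ring

theorem log_two_le_log_two_mul_div {N n : ℕ} (hn : 0 < n) (hnN : n ≤ N) :
    Real.log 2 ≤ Real.log (2 * N / n) :=
  Real.log_le_log two_pos <| by
    rw [le_div_iff₀ (by exact_mod_cast hn), mul_le_mul_iff_right₀ two_pos]; exact_mod_cast hnN

theorem one_add_two_mul_log_div_two_pow_le {N n j : ℕ} (hn : 0 < n) (hnN : n ≤ N)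
    (hj : j ≤ Nat.log 2 n) :
    1 + 2 * Real.log (N / 2 ^ j) ≤
      4 * ((Nat.log 2 n : ℝ) + 1 - j) * Real.log (2 * N / n) := by
  have hn' : (0 : ℝ) < n := by exact_mod_cast hn
  have hN' : (0 : ℝ) < N := by exact_mod_cast hn.trans_le hnN
  have hlog2 := log_two_le_log_two_mul_div hn hnN
  have hlogn : Real.log n < (Nat.log 2 n + 1) * Real.log 2 := by
    rw [← Real.log_rpow two_pos, Real.log_lt_log_iff hn' (by positivity)]
    exact_mod_cast Nat.lt_pow_succ_log_self one_lt_two n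
  have hj' : (0 : ℝ) ≤ Nat.log 2 n - j := by rw [sub_nonneg]; exact_mod_cast hj
  rw [Real.log_div (by positivity) hn'.ne', Real.log_mul two_ne_zero hN'.ne'] at hlog2 ⊢
  rw [Real.log_div hN'.ne' (by positivity), Real.log_pow]
  nlinarith [mul_le_mul_of_nonneg_left hlog2 hj', Real.log_two_gt_d9]

theorem sum_range_scaleBound_le {N n : ℕ} (hn : 0 < n) (hnN : n ≤ N) :
    ∑ j ∈ range (Nat.log 2 n + 1), scaleBound N j ≤ 100 * n * Real.log (2 * N / n) := by
  set J := Nat.log 2 n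
  set L := Real.log (2 * N / n)
  have hL : 1 / 2 ≤ L := by linarith [log_two_le_log_two_mul_div hn hnN, Real.log_two_gt_d9]
  have h2J : (2 : ℝ) ^ J ≤ n := by exact_mod_cast Nat.pow_log_le_self 2 hn.ne'
  have hJ : (J : ℝ) + 1 ≤ n := by
    exact_mod_cast Nat.lt_two_pow_self.trans_le (Nat.pow_log_le_self 2 hn.ne')
  calc ∑ j ∈ range (J + 1), scaleBound N j
      ≤ ∑ j ∈ range (J + 1), (24 * L * (2 ^ j * (((J + 1 : ℕ) : ℝ) - j)) + 1) :=
        sum_le_sum fun j hj => by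
          have := one_add_two_mul_log_div_two_pow_le hn hnN (Nat.lt_succ_iff.1 (mem_range.1 hj))
          push_cast [scaleBound]
          nlinarith [pow_pos (two_pos : (0 : ℝ) < 2) j]
    _ = 24 * L * (4 * 2 ^ J - (J + 1) - 2) + (J + 1) := by
        rw [sum_add_distrib, ← mul_sum, sum_range_two_pow_mul_sub, sum_const, card_range,
          nsmul_one]
        push_cast
        ring
    _ ≤ 100 * n * L := by nlinarith

/-- Existence of (N,n)-selective families of size O(n log(N/n)): there is an absolute
    constant c > 0 such that for all N > 2 and 0 < n ≤ N there is a family F of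
    subsets of [N] with |F| ≤ c·n·log(2N/n) such that every nonempty Z ⊆ [N] with
    |Z| ≤ n satisfies |Z ∩ F| = 1 for some F ∈ F. -/
theorem selective_family_exists :
    ∃ c : ℝ, 0 < c ∧ ∀ N n : ℕ, 2 < N → 0 < n → n ≤ N →
      ∃ F : Finset (Finset (Fin N)),
        ((F.card : ℝ) ≤ c * n * Real.log (2 * (N : ℝ) / n)) ∧
        ∀ Z : Finset (Fin N), Z.Nonempty → Z.card ≤ n →
          ∃ Fi ∈ F, (Z ∩ Fi).card = 1 := by
  refine ⟨100, by norm_num, fun N n _ hn hnN => ?_⟩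
  set J := Nat.log 2 n
  have hscale : ∀ j ∈ range (J + 1), ∃ G : Finset (Finset (Fin N)), #G ≤ scaleBound N j ∧
      ∀ Z : Finset (Fin N), 2 ^ j ≤ #Z → #Z ≤ 2 ^ (j + 1) → Selects G Z := fun j hj => by
    have h2j : 2 ^ j ≤ n :=
      (Nat.pow_le_pow_right two_pos (Nat.lt_succ_iff.1 (mem_range.1 hj))).trans
        (Nat.pow_log_le_self 2 hn.ne')
    simpa using exists_selects_of_two_pow_le (α := Fin N) (by simpa using h2j.trans hnN)
  choose! G hGcard hGsel using hscale
  refine ⟨(range (J + 1)).biUnion G, ?_, fun Z hZ hZn => ?_⟩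
  · calc (#((range (J + 1)).biUnion G) : ℝ) ≤ ∑ j ∈ range (J + 1), ((#(G j) : ℕ) : ℝ) :=
          mod_cast card_biUnion_le
      _ ≤ ∑ j ∈ range (J + 1), scaleBound N j := sum_le_sum hGcard
      _ ≤ 100 * n * Real.log (2 * N / n) := sum_range_scaleBound_le hn hnN
  · have hj : Nat.log 2 #Z ∈ range (J + 1) :=
      mem_range.2 (Nat.lt_succ_of_le (Nat.log_mono_right hZn))
    obtain ⟨F, hF, hZF⟩ := hGsel _ hj Z (Nat.pow_log_le_self 2 hZ.card_pos.ne')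
      (Nat.lt_pow_succ_log_self one_lt_two _).le
    exact ⟨F, mem_biUnion.2 ⟨_, hj, hF⟩, hZF⟩
end
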